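/- Let ε ∈ ℂ^d, E ∈ ℂ^{d×m}, ζ = r + is ∈ ℂ with r,s ≠ 0, assume ζ²I − EᴴE is invertible, and let Ω be any matrix with ‖ΩᴴΩ‖ ≤ 1 (operator norm). Then the quantity γ̃ := (δ + εᴴE(ζ²I−EᴴE)⁻¹ΩᴴΩ(ζ²I−EᴴE)⁻¹Eᴴε)/(ζ² − εᴴε − εᴴE(ζ²I−EᴴE)⁻¹Eᴴε), where δ ∈ {0,1}, satisfies |γ̃| ≤ 1/(2|rs|). -/

import Mathlib

/-!
Put `A = ζ²I − EᴴE`, `x = Eᴴε` and `v = A⁻¹x`. Since `EᴴE` is Hermitian, `A` and hence `A⁻¹` are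
normal, so `‖(A⁻¹)ᴴx‖ = ‖v‖`; with `‖Ω‖ ≤ 1` Cauchy–Schwarz bounds the numerator by `1 + ‖v‖²`.
In the denominator `εᴴEA⁻¹Eᴴε = (Av)ᴴv = conj(ζ²)‖v‖² − ‖Ev‖²`, so its imaginary part is
`Im(ζ²)(1 + ‖v‖²) = 2rs(1 + ‖v‖²)`, which bounds its modulus from below.
-/

open Matrix WithLp Complex

namespace Matrix

variable {m n : Type*} [Fintype m] [Fintype n]

section Normal

variable [DecidableEq n]

lemma isStarNormal_nonsing_inv {α : Type*} [CommRing α] [StarRing α] (A : Matrix n n α)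
    [IsStarNormal A] : IsStarNormal A⁻¹ := by
  rw [nonsing_inv_eq_ringInverse]
  by_cases hA : IsUnit A
  · obtain ⟨u, rfl⟩ := hA
    rw [Ring.inverse_unit]
    infer_instance
  · rw [Ring.inverse_non_unit _ hA]
    infer_instance

lemma isStarNormal_smul_one_sub {α : Type*} [CommRing α] [StarRing α] (c : α)
    {H : Matrix n n α} (hH : H.IsHermitian) : IsStarNormal (c • 1 - H) :=
  haveI := hH.isSelfAdjoint.isStarNormal
  ((Commute.one_left _).smul_left c).isStarNormal_sub

lemma norm_toLp_conjTranspose_mulVec {𝕜 : Type*} [RCLike 𝕜] (N : Matrix n n 𝕜) [IsStarNormal N]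
    (x : n → 𝕜) : ‖toLp 2 (Nᴴ *ᵥ x)‖ = ‖toLp 2 (N *ᵥ x)‖ := by
  have h := ContinuousLinearMap.isStarNormal_iff_norm_eq_adjoint.mp
    (IsStarNormal.map (toEuclideanCLM (n := n) (𝕜 := 𝕜)) N) (toLp 2 x)
  rw [← ContinuousLinearMap.star_eq_adjoint, ← map_star, star_eq_conjTranspose,
    toEuclideanCLM_toLp, toEuclideanCLM_toLp] at h
  exact h.symm

end Normal

section Euclidean

variable {𝕜 : Type*} [RCLike 𝕜]

lemma star_dotProduct_eq_inner (a b : n → 𝕜) :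
    star a ⬝ᵥ b = inner 𝕜 (toLp 2 a) (toLp 2 b) := by
  rw [EuclideanSpace.inner_toLp_toLp, dotProduct_comm]

lemma star_dotProduct_self (a : n → 𝕜) : star a ⬝ᵥ a = ((‖toLp 2 a‖ ^ 2 : ℝ) : 𝕜) := by
  rw [star_dotProduct_eq_inner, inner_self_eq_norm_sq_to_K]
  norm_cast

lemma norm_star_dotProduct_le (a b : n → 𝕜) : ‖star a ⬝ᵥ b‖ ≤ ‖toLp 2 a‖ * ‖toLp 2 b‖ := by
  rw [star_dotProduct_eq_inner]
  exact norm_inner_le_norm _ _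

open scoped Matrix.Norms.L2Operator in
lemma norm_toLp_mulVec_le_of_norm_conjTranspose_mul_self_le_one [DecidableEq n]
    {M : Matrix m n 𝕜} (hM : ‖toEuclideanCLM (𝕜 := 𝕜) (Mᴴ * M)‖ ≤ 1) (x : n → 𝕜) :
    ‖toLp 2 (M *ᵥ x)‖ ≤ ‖toLp 2 x‖ := by
  rw [← cstar_norm_def, l2_opNorm_conjTranspose_mul_self] at hM
  have hM_le_one : ‖M‖ ≤ 1 := by nlinarith [norm_nonneg M]
  calc ‖toLp 2 (M *ᵥ x)‖ ≤ ‖M‖ * ‖toLp 2 x‖ := l2_opNorm_mulVec M (toLp 2 x)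
    _ ≤ ‖toLp 2 x‖ := mul_le_of_le_one_left (norm_nonneg _) hM_le_one

lemma norm_star_mulVec_conjTranspose_dotProduct_le [DecidableEq n] {Ω : Matrix m n 𝕜}
    (hΩ : ‖toEuclideanCLM (𝕜 := 𝕜) (Ωᴴ * Ω)‖ ≤ 1) (R : Matrix n n 𝕜) [IsStarNormal R]
    (x : n → 𝕜) :
    ‖star (Ω *ᵥ (Rᴴ *ᵥ x)) ⬝ᵥ (Ω *ᵥ (R *ᵥ x))‖ ≤ ‖toLp 2 (R *ᵥ x)‖ ^ 2 := by
  have hcontr := norm_toLp_mulVec_le_of_norm_conjTranspose_mul_self_le_one hΩ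
  calc ‖star (Ω *ᵥ (Rᴴ *ᵥ x)) ⬝ᵥ (Ω *ᵥ (R *ᵥ x))‖
      ≤ ‖toLp 2 (Ω *ᵥ (Rᴴ *ᵥ x))‖ * ‖toLp 2 (Ω *ᵥ (R *ᵥ x))‖ := norm_star_dotProduct_le _ _
    _ ≤ ‖toLp 2 (Rᴴ *ᵥ x)‖ * ‖toLp 2 (R *ᵥ x)‖ :=
      mul_le_mul (hcontr _) (hcontr _) (norm_nonneg _) (norm_nonneg _)
    _ = ‖toLp 2 (R *ᵥ x)‖ ^ 2 := by rw [norm_toLp_conjTranspose_mulVec, sq]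

end Euclidean

section Complex

variable [DecidableEq n]

lemma im_star_smul_one_sub_mulVec_dotProduct (c : ℂ) (E : Matrix m n ℂ) (v : n → ℂ) :
    (star ((c • 1 - Eᴴ * E) *ᵥ v) ⬝ᵥ v).im = -c.im * ‖toLp 2 v‖ ^ 2 := by
  rw [star_mulVec, ← dotProduct_mulVec, conjTranspose_sub, conjTranspose_smul, conjTranspose_one,
    conjTranspose_mul, conjTranspose_conjTranspose, sub_mulVec, smul_mulVec, one_mulVec,
    dotProduct_sub, dotProduct_smul, ← mulVec_mulVec, dotProduct_mulVec, ← star_mulVec]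
  simp [star_dotProduct_self, -ofReal_pow]

lemma im_sub_star_dotProduct_sub_star_dotProduct_inv_mulVec {c : ℂ} {E : Matrix m n ℂ}
    (hA : IsUnit (c • 1 - Eᴴ * E).det) (a : m → ℂ) (x : n → ℂ) :
    (c - star a ⬝ᵥ a - star x ⬝ᵥ ((c • 1 - Eᴴ * E)⁻¹ *ᵥ x)).im
      = c.im * (1 + ‖toLp 2 ((c • 1 - Eᴴ * E)⁻¹ *ᵥ x)‖ ^ 2) := by
  obtain ⟨v, rfl⟩ : ∃ v, x = (c • 1 - Eᴴ * E) *ᵥ v :=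
    ⟨(c • 1 - Eᴴ * E)⁻¹ *ᵥ x, by rw [mulVec_mulVec, mul_nonsing_inv _ hA, one_mulVec]⟩
  rw [mulVec_mulVec, nonsing_inv_mul _ hA, one_mulVec, sub_im, sub_im,
    im_star_smul_one_sub_mulVec_dotProduct]
  simp only [star_dotProduct_self, coe_algebraMap, ofReal_im]
  ring

end Complex

end Matrix

lemma Complex.im_sq (z : ℂ) : (z ^ 2).im = 2 * z.re * z.im := by
  rw [sq, mul_im]
  ring

/-- The martingale-difference quotient
γ̃ = (δ + εᴴE R ΩᴴΩ R Eᴴε)/(ζ² − εᴴε − εᴴE R Eᴴε), R = (ζ²I−EᴴE)⁻¹,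
satisfies |γ̃| ≤ 1/(2|rs|) whenever ‖ΩᴴΩ‖ ≤ 1 and δ ∈ {0,1}. -/
theorem martingale_difference_bound {d m k : ℕ} (ε : Fin d → ℂ)
    (E : Matrix (Fin d) (Fin m) ℂ) (Ω : Matrix (Fin k) (Fin m) ℂ)
    (ζ : ℂ) (hr : ζ.re ≠ 0) (hs : ζ.im ≠ 0)
    (hinv : IsUnit (ζ ^ 2 • (1 : Matrix (Fin m) (Fin m) ℂ) - Eᴴ * E).det)
    (hΩ : ‖Matrix.toEuclideanCLM (𝕜 := ℂ) (Ωᴴ * Ω)‖ ≤ 1)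
    (δ : ℂ) (hδ : δ = 0 ∨ δ = 1) :
    ‖((δ + star ε ⬝ᵥ ((E * (ζ ^ 2 • (1 : Matrix (Fin m) (Fin m) ℂ) - Eᴴ * E)⁻¹ *
              (Ωᴴ * Ω) * (ζ ^ 2 • (1 : Matrix (Fin m) (Fin m) ℂ) - Eᴴ * E)⁻¹ * Eᴴ) *ᵥ ε)) /
          (ζ ^ 2 - star ε ⬝ᵥ ε -
            star ε ⬝ᵥ ((E * (ζ ^ 2 • (1 : Matrix (Fin m) (Fin m) ℂ) - Eᴴ * E)⁻¹ * Eᴴ) *ᵥ ε)))‖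
      ≤ 1 / (2 * |ζ.re * ζ.im|) := by
  set A := ζ ^ 2 • (1 : Matrix (Fin m) (Fin m) ℂ) - Eᴴ * E
  set t := ‖toLp 2 (A⁻¹ *ᵥ (Eᴴ *ᵥ ε))‖ ^ 2
  have := isStarNormal_smul_one_sub (ζ ^ 2) (isHermitian_conjTranspose_mul_self E)
  have := isStarNormal_nonsing_inv A
  have ht : 0 < 1 + t := by positivity
  have hrs : 0 < 2 * |ζ.re * ζ.im| := by positivity
  have hnum : ‖δ + star ε ⬝ᵥ ((E * A⁻¹ * (Ωᴴ * Ω) * A⁻¹ * Eᴴ) *ᵥ ε)‖ ≤ 1 + t := by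
    have hquad : star ε ⬝ᵥ ((E * A⁻¹ * (Ωᴴ * Ω) * A⁻¹ * Eᴴ) *ᵥ ε)
        = star (Ω *ᵥ (A⁻¹ᴴ *ᵥ (Eᴴ *ᵥ ε))) ⬝ᵥ (Ω *ᵥ (A⁻¹ *ᵥ (Eᴴ *ᵥ ε))) := by
      simp only [star_mulVec, dotProduct_mulVec, vecMul_vecMul, conjTranspose_conjTranspose,
        Matrix.mul_assoc]
    have hδ_le : ‖δ‖ ≤ 1 := by rcases hδ with rfl | rfl <;> simp
    grw [norm_add_le, hquad, hδ_le, norm_star_mulVec_conjTranspose_dotProduct_le hΩ]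
  have hden : 2 * |ζ.re * ζ.im| * (1 + t) ≤
      ‖ζ ^ 2 - star ε ⬝ᵥ ε - star ε ⬝ᵥ ((E * A⁻¹ * Eᴴ) *ᵥ ε)‖ := by
    have hquad : star ε ⬝ᵥ ((E * A⁻¹ * Eᴴ) *ᵥ ε) = star (Eᴴ *ᵥ ε) ⬝ᵥ (A⁻¹ *ᵥ (Eᴴ *ᵥ ε)) := by
      simp only [star_mulVec, dotProduct_mulVec, vecMul_vecMul, conjTranspose_conjTranspose]
    calc 2 * |ζ.re * ζ.im| * (1 + t) = |2 * ζ.re * ζ.im * (1 + t)| := by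
          rw [mul_assoc 2 ζ.re, abs_mul (2 * _) (1 + t), abs_mul 2, abs_two, abs_of_pos ht]
      _ = |(ζ ^ 2 - star ε ⬝ᵥ ε - star ε ⬝ᵥ ((E * A⁻¹ * Eᴴ) *ᵥ ε)).im| := by
          rw [hquad, im_sub_star_dotProduct_sub_star_dotProduct_inv_mulVec hinv, im_sq]
      _ ≤ _ := abs_im_le_norm _
  rw [norm_div, div_le_div_iff₀ (hden.trans_lt' (by positivity)) hrs, one_mul]
  grw [hnum]
  linarith
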